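/- Given a sequence of vertex sets (S_1,...,S_k) with update dependencies determined by the edge-consistency model, executing a task (v, i) with v ∈ S_i early is safe—i.e., yields the same result as the barrier-synchronized execution—provided all tasks (u, j) with j < i and u adjacent to or equal to v have completed. -/

import Mathlib

/-! Any two tasks that the given order and the round-by-round order `allTasks` place in opposite
order are independent: either they lie in different rounds, where the linear-extension hypothesis
rules out a dependency, or in the same round, whose vertices are pairwise non-adjacent. Independent
edge-consistent updates commute, since neither writes what the other reads, so both orders fold to
the same state. Inside a round every sequential order realises the simultaneous `RoundStep`, again
because its vertices are pairwise independent. -/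

/-- Data locations of a data graph: vertex data and edge data. -/
abbrev Loc (V : Type*) := V ⊕ Sym2 V

/-- The read scope of a vertex `v` under edge consistency: `v`, its neighbors,
and its incident edges. -/
def readScope {V : Type*} (G : SimpleGraph V) (v : V) : Set (Loc V) :=
  {l | match l with
    | Sum.inl u => u = v ∨ G.Adj u v
    | Sum.inr e => v ∈ e ∧ e ∈ G.edgeSet}

/-- The write set of a vertex `v` under edge consistency: `v` itself and its
incident edges. -/
def writeSet {V : Type*} (G : SimpleGraph V) (v : V) : Set (Loc V) :=
  {l | match l with
    | Sum.inl u => u = v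
    | Sum.inr e => v ∈ e ∧ e ∈ G.edgeSet}

/-- One barrier round: all vertices of `S` are updated simultaneously, reading
the pre-round state. -/
def RoundStep {V D : Type*} (G : SimpleGraph V) (f : V → (Loc V → D) → (Loc V → D))
    (S : Finset V) (σ σ' : Loc V → D) : Prop :=
  (∀ v ∈ S, ∀ l ∈ writeSet G v, σ' l = f v σ l) ∧
  (∀ l, (∀ v ∈ S, l ∉ writeSet G v) → σ' l = σ l)

/-- Barrier-synchronized execution of a set schedule `S_1, ..., S_k`: the rounds
are executed in order with a barrier in between; within each round the updated
vertices are pairwise non-adjacent as required by edge consistency. -/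
inductive BarrierExec {V D : Type*} (G : SimpleGraph V)
    (f : V → (Loc V → D) → (Loc V → D)) :
    List (Finset V) → (Loc V → D) → (Loc V → D) → Prop
  | nil (σ : Loc V → D) : BarrierExec G f [] σ σ
  | cons {S : Finset V} {rounds : List (Finset V)} {σ σ₁ σ₂ : Loc V → D} :
      (∀ u ∈ S, ∀ v ∈ S, u ≠ v → ¬ G.Adj u v) →
      RoundStep G f S σ σ₁ → BarrierExec G f rounds σ₁ σ₂ →
      BarrierExec G f (S :: rounds) σ σ₂

/-- The list of all tasks `(i, v)` with `v ∈ S_i` of a set schedule. -/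
noncomputable def allTasks {V : Type*} (Ss : List (Finset V)) : List (ℕ × V) :=
  Ss.zipIdx.flatMap (fun p => p.1.toList.map (fun v => (p.2, v)))

namespace List

variable {α β : Type*}

theorem foldl_apply_of_forall_comm (g : β → α → β) (x : α) :
    ∀ (l : List α) (s : β), (∀ a ∈ l, ∀ s, g (g s a) x = g (g s x) a) →
      l.foldl g (g s x) = g (l.foldl g s) x
  | [], _, _ => rfl
  | a :: l, s, h => by
    rw [foldl_cons, foldl_cons, ← h a mem_cons_self s,
      foldl_apply_of_forall_comm g x l (g s a) fun b hb => h b (mem_cons_of_mem a hb)]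

theorem Perm.foldl_eq_of_inversions_comm (g : β → α → β) :
    ∀ {l₁ l₂ : List α}, l₁ ~ l₂ →
      (∀ a b, [a, b] <+ l₁ → [b, a] <+ l₂ → ∀ s, g (g s a) b = g (g s b) a) →
      ∀ s, l₁.foldl g s = l₂.foldl g s
  | _, [], hp, _, s => by rw [hp.eq_nil]
  | l₁, x :: l₂, hp, hcomm, s => by
    obtain ⟨P, Q, rfl⟩ := append_of_mem (hp.mem_iff.mpr mem_cons_self)
    have hPQ : (P ++ Q) ~ l₂ := (perm_middle.symm.trans hp).cons_inv
    have hx : ∀ a ∈ P, ∀ s, g (g s a) x = g (g s x) a := by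
      intro a ha s
      by_cases hax : a = x
      · rw [hax]
      have ha₂ : a ∈ l₂ := by
        simpa [hax] using hp.subset (mem_append_left (x :: Q) ha)
      exact hcomm a x ((singleton_sublist.mpr ha).append (singleton_sublist.mpr mem_cons_self))
        ((singleton_sublist.mpr ha₂).cons_cons x) s
    have hPQ_comm : ∀ a b, [a, b] <+ P ++ Q → [b, a] <+ l₂ →
        ∀ s, g (g s a) b = g (g s b) a := fun a b hab hba =>
      hcomm a b (hab.trans ((sublist_cons_self x Q).append_left P))
        (hba.trans (sublist_cons_self x l₂))
    calc (P ++ x :: Q).foldl g s = Q.foldl g (P.foldl g (g s x)) := by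
          rw [foldl_append, foldl_cons, foldl_apply_of_forall_comm g x P s hx]
      _ = l₂.foldl g (g s x) := by
          rw [← foldl_append, hPQ.foldl_eq_of_inversions_comm g hPQ_comm]

theorem Nodup.idxOf_lt_of_pair_sublist [BEq α] [LawfulBEq α] {a b : α} :
    ∀ {l : List α}, l.Nodup → [a, b] <+ l → l.idxOf a < l.idxOf b
  | [], _, h => absurd h.length_le (by simp)
  | c :: l, hnd, .cons _ h => by
    have hc : ∀ y ∈ [a, b], c ≠ y := fun y hy hcy => (nodup_cons.mp hnd).1 (hcy ▸ h.subset hy)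
    rw [idxOf_cons, idxOf_cons, beq_false_of_ne (hc a (by simp)), beq_false_of_ne (hc b (by simp))]
    exact Nat.succ_lt_succ ((nodup_cons.mp hnd).2.idxOf_lt_of_pair_sublist h)
  | _ :: l, hnd, .cons_cons _ h => by
    have hab : a ≠ b := fun e => (nodup_cons.mp hnd).1 (e ▸ h.subset mem_cons_self)
    rw [idxOf_cons_self, idxOf_cons, beq_false_of_ne hab]
    exact Nat.succ_pos _

theorem pairwise_snd_lt_zipIdx (l : List α) (n : ℕ) :
    (l.zipIdx n).Pairwise (fun p q => p.2 < q.2) := by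
  have := pairwise_lt_range' (s := n) (n := l.length)
  rwa [← zipIdx_map_snd, pairwise_map] at this

end List

section EdgeConsistency

variable {V D : Type*} {G : SimpleGraph V}

theorem writeSet_subset_readScope (v : V) : writeSet G v ⊆ readScope G v := by
  rintro (u | e) hl
  · exact Or.inl hl
  · exact hl

theorem disjoint_readScope_writeSet {u v : V} (hne : u ≠ v) (hadj : ¬ G.Adj u v) :
    Disjoint (readScope G u) (writeSet G v) := by
  refine Set.disjoint_left.mpr ?_
  rintro (w | e) hr hw
  · obtain rfl : w = v := hw
    exact hr.elim (fun h => hne h.symm) fun h => hadj h.symm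
  · obtain rfl : e = s(u, v) := (Sym2.mem_and_mem_iff hne).mp ⟨hr.1, hw.1⟩
    exact hadj (G.mem_edgeSet.mp hw.2)

structure EdgeConsistentUpdate (G : SimpleGraph V) (f : V → (Loc V → D) → (Loc V → D)) :
    Prop where
  apply_eq_of_eqOn_readScope : ∀ v (σ σ' : Loc V → D), (∀ l ∈ readScope G v, σ l = σ' l) →
    ∀ l ∈ writeSet G v, f v σ l = f v σ' l
  apply_of_notMem_writeSet : ∀ v (σ : Loc V → D) (l : Loc V), l ∉ writeSet G v → f v σ l = σ l

theorem RoundStep.unique {f : V → (Loc V → D) → (Loc V → D)} {S : Finset V}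
    {σ σ₁ σ₂ : Loc V → D} (h₁ : RoundStep G f S σ σ₁) (h₂ : RoundStep G f S σ σ₂) :
    σ₁ = σ₂ := by
  funext l
  by_cases hl : ∃ v ∈ S, l ∈ writeSet G v
  · obtain ⟨v, hv, hlv⟩ := hl
    rw [h₁.1 v hv l hlv, h₂.1 v hv l hlv]
  · push Not at hl
    rw [h₁.2 l hl, h₂.2 l hl]

namespace EdgeConsistentUpdate

variable {f : V → (Loc V → D) → (Loc V → D)} (hf : EdgeConsistentUpdate G f)
include hf

theorem apply_eq_on_readScope_of_independent {u v : V} (hne : u ≠ v) (hadj : ¬ G.Adj u v)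
    (σ : Loc V → D) : ∀ l ∈ readScope G u, f v σ l = σ l := fun l hl =>
  hf.apply_of_notMem_writeSet v σ l (Set.disjoint_left.mp (disjoint_readScope_writeSet hne hadj) hl)

theorem apply_comm {u v : V} (hne : u ≠ v) (hadj : ¬ G.Adj u v) (σ : Loc V → D) :
    f v (f u σ) = f u (f v σ) := by
  have hadj' : ¬ G.Adj v u := fun h => hadj h.symm
  funext l
  by_cases hv : l ∈ writeSet G v
  · have hu : l ∉ writeSet G u := Set.disjoint_left.mp
      (disjoint_readScope_writeSet hne.symm hadj') (writeSet_subset_readScope v hv)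
    rw [hf.apply_of_notMem_writeSet u _ l hu]
    exact hf.apply_eq_of_eqOn_readScope v _ _
      (hf.apply_eq_on_readScope_of_independent hne.symm hadj' σ) l hv
  · rw [hf.apply_of_notMem_writeSet v _ l hv]
    by_cases hu : l ∈ writeSet G u
    · exact hf.apply_eq_of_eqOn_readScope u _ _
        (fun l' hl' => (hf.apply_eq_on_readScope_of_independent hne hadj σ l' hl').symm) l hu
    · rw [hf.apply_of_notMem_writeSet u _ l hu, hf.apply_of_notMem_writeSet u _ l hu,
        hf.apply_of_notMem_writeSet v _ l hv]

theorem roundStep_foldl [DecidableEq V] :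
    ∀ {l : List V}, l.Pairwise (fun u v => u ≠ v ∧ ¬ G.Adj u v) → ∀ σ : Loc V → D,
      RoundStep G f l.toFinset σ (l.foldl (fun s v => f v s) σ)
  | [], _, σ => ⟨by simp, fun _ _ => rfl⟩
  | v :: l, hl, σ => by
    obtain ⟨hv, hl⟩ := List.pairwise_cons.mp hl
    obtain ⟨ih₁, ih₂⟩ := roundStep_foldl hl (f v σ)
    have hvl : ∀ x ∈ writeSet G v, ∀ w ∈ l.toFinset, x ∉ writeSet G w := fun x hx w hw =>
      have ⟨hne, hadj⟩ := hv w (List.mem_toFinset.mp hw)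
      Set.disjoint_left.mp (disjoint_readScope_writeSet hne hadj) (writeSet_subset_readScope v hx)
    refine ⟨fun w hw x hx => ?_, fun x hx => ?_⟩
    · rw [List.toFinset_cons, Finset.mem_insert] at hw
      rw [List.foldl_cons]
      rcases hw with rfl | hw
      · exact ih₂ x (hvl x hx)
      · obtain ⟨hne, hadj⟩ := hv w (List.mem_toFinset.mp hw)
        rw [ih₁ w hw x hx]
        exact hf.apply_eq_of_eqOn_readScope w _ _
          (hf.apply_eq_on_readScope_of_independent (Ne.symm hne) (fun h => hadj h.symm) σ) x hx
    · rw [List.foldl_cons, ih₂ x fun w hw => hx w (by simp [hw])]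
      exact hf.apply_of_notMem_writeSet v σ x (hx v (by simp))

end EdgeConsistentUpdate

end EdgeConsistency

section Schedule

variable {V D : Type*} {G : SimpleGraph V} {f : V → (Loc V → D) → (Loc V → D)}

theorem BarrierExec.pairwise_not_adj {Ss : List (Finset V)} {σ σf : Loc V → D}
    (h : BarrierExec G f Ss σ σf) : ∀ S ∈ Ss, ∀ u ∈ S, ∀ v ∈ S, u ≠ v → ¬ G.Adj u v := by
  induction h with
  | nil => simp
  | cons hS _ _ ih => exact List.forall_mem_cons.mpr ⟨hS, ih⟩

theorem EdgeConsistentUpdate.foldl_toList_eq_of_roundStep (hf : EdgeConsistentUpdate G f)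
    {S : Finset V} (hS : ∀ u ∈ S, ∀ v ∈ S, u ≠ v → ¬ G.Adj u v) {σ σ₁ : Loc V → D}
    (hstep : RoundStep G f S σ σ₁) : S.toList.foldl (fun s v => f v s) σ = σ₁ := by
  classical
  have hpair : S.toList.Pairwise (fun u v => u ≠ v ∧ ¬ G.Adj u v) :=
    S.nodup_toList.imp_of_mem fun hu hv hne =>
      ⟨hne, hS _ (Finset.mem_toList.mp hu) _ (Finset.mem_toList.mp hv) hne⟩
  have hround := hf.roundStep_foldl hpair σ
  rw [Finset.toList_toFinset] at hround
  exact hround.unique hstep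

theorem EdgeConsistentUpdate.foldl_flatMap_toList_eq_of_barrierExec
    (hf : EdgeConsistentUpdate G f) {Ss : List (Finset V)} {σ σf : Loc V → D}
    (h : BarrierExec G f Ss σ σf) : (Ss.flatMap Finset.toList).foldl (fun s v => f v s) σ = σf := by
  induction h with
  | nil => rfl
  | cons hS hstep _ ih =>
    rw [List.flatMap_cons, List.foldl_append, hf.foldl_toList_eq_of_roundStep hS hstep, ih]

theorem allTasks_map_snd (Ss : List (Finset V)) :
    (allTasks Ss).map Prod.snd = Ss.flatMap Finset.toList := by
  conv_rhs => rw [← List.zipIdx_map_fst 0 Ss]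
  rw [allTasks, List.map_flatMap, List.flatMap_map]
  simp

theorem mem_allTasks {Ss : List (Finset V)} {t : ℕ × V} :
    t ∈ allTasks Ss ↔ ∃ S, Ss[t.1]? = some S ∧ t.2 ∈ S := by
  obtain ⟨i, v⟩ := t
  simp [allTasks, List.mem_zipIdx_iff_getElem?]

theorem pairwise_allTasks (Ss : List (Finset V)) :
    (allTasks Ss).Pairwise (fun a b => a.1 < b.1 ∨ a.1 = b.1 ∧ a.2 ≠ b.2) := by
  rw [allTasks, List.pairwise_flatMap]
  refine ⟨fun p _ => List.pairwise_map.mpr (p.1.nodup_toList.imp fun hne => Or.inr ⟨rfl, hne⟩), ?_⟩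
  refine (List.pairwise_snd_lt_zipIdx Ss 0).imp fun hpq x hx y hy => Or.inl ?_
  obtain ⟨_, _, rfl⟩ := List.mem_map.mp hx
  obtain ⟨_, _, rfl⟩ := List.mem_map.mp hy
  exact hpq

theorem nodup_allTasks (Ss : List (Finset V)) : (allTasks Ss).Nodup :=
  (pairwise_allTasks Ss).imp fun h heq => by rcases h with h | h <;> simp_all

theorem independent_of_inversion_allTasks [BEq V] [LawfulBEq V] {Ss : List (Finset V)}
    (hS : ∀ S ∈ Ss, ∀ u ∈ S, ∀ v ∈ S, u ≠ v → ¬ G.Adj u v)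
    {L : List (ℕ × V)} (hperm : L.Perm (allTasks Ss))
    (hlinext : ∀ a b : ℕ × V, a ∈ L → b ∈ L →
      a.1 < b.1 → (a.2 = b.2 ∨ G.Adj a.2 b.2) → L.idxOf a < L.idxOf b)
    {a b : ℕ × V} (hab : [a, b].Sublist L) (hba : [b, a].Sublist (allTasks Ss)) :
    a.2 ≠ b.2 ∧ ¬ G.Adj a.2 b.2 := by
  have hidx : L.idxOf a < L.idxOf b :=
    (hperm.nodup_iff.mpr (nodup_allTasks Ss)).idxOf_lt_of_pair_sublist hab
  rcases List.pairwise_pair.mp ((pairwise_allTasks Ss).sublist hba) with hlt | ⟨heq, hne⟩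
  · have hindep : ¬(b.2 = a.2 ∨ G.Adj b.2 a.2) := fun hdep =>
      lt_asymm hidx (hlinext b a (hab.subset (by simp)) (hab.subset (by simp)) hlt hdep)
    exact ⟨fun h => hindep (Or.inl h.symm), fun h => hindep (Or.inr h.symm)⟩
  · obtain ⟨S, hSb, hb⟩ := mem_allTasks.mp (hba.subset (by simp : b ∈ [b, a]))
    obtain ⟨S', hSa, ha⟩ := mem_allTasks.mp (hba.subset (by simp : a ∈ [b, a]))
    obtain rfl : S = S' := by rw [← heq, hSb] at hSa; exact Option.some.inj hSa
    exact ⟨hne.symm, hS S (List.mem_of_getElem? hSb) _ ha _ hb hne.symm⟩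

end Schedule

/-- Early execution in the set scheduler is safe: executing the tasks `(i, v)`
of a set schedule sequentially in any order that respects the edge-consistency
dependency DAG — task `(j, u)` must come before `(i, v)` whenever `j < i` and
`u = v` or `u` is adjacent to `v` — produces the same final state as the
barrier-synchronized execution of the schedule. -/
theorem set_schedule_early_execution_safe
    {V D : Type*} [DecidableEq V] (G : SimpleGraph V)
    (f : V → (Loc V → D) → (Loc V → D))
    (hreads : ∀ v (σ σ' : Loc V → D), (∀ l ∈ readScope G v, σ l = σ' l) →
      ∀ l ∈ writeSet G v, f v σ l = f v σ' l)
    (hwrites : ∀ v (σ : Loc V → D) (l : Loc V), l ∉ writeSet G v → f v σ l = σ l)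
    (Ss : List (Finset V)) (σ σf : Loc V → D)
    (hexec : BarrierExec G f Ss σ σf)
    (L : List (ℕ × V)) (hperm : L.Perm (allTasks Ss))
    (hlinext : ∀ a b : ℕ × V, a ∈ L → b ∈ L →
      a.1 < b.1 → (a.2 = b.2 ∨ G.Adj a.2 b.2) → L.idxOf a < L.idxOf b) :
    L.foldl (fun s t => f t.2 s) σ = σf := by
  have hf : EdgeConsistentUpdate G f := ⟨hreads, hwrites⟩
  calc L.foldl (fun s t => f t.2 s) σ = (allTasks Ss).foldl (fun s t => f t.2 s) σ := by
        refine hperm.foldl_eq_of_inversions_comm _ (fun a b hab hba s => ?_) σ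
        obtain ⟨hne, hadj⟩ :=
          independent_of_inversion_allTasks hexec.pairwise_not_adj hperm hlinext hab hba
        exact hf.apply_comm hne hadj s
    _ = ((allTasks Ss).map Prod.snd).foldl (fun s v => f v s) σ := by rw [List.foldl_map]
    _ = σf := by rw [allTasks_map_snd, hf.foldl_flatMap_toList_eq_of_barrierExec hexec]
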